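/- There exists a constant c such that for every binary string a: |C(a) − K(a | C(a))| ≤ c. That is, C(a) = K(a|C(a)) + O(1). -/

import Mathlib

/-- Binary strings. -/
abbrev BinStr := List Bool

/-- Standard encoding of a binary string as a natural number. -/
def enc (a : BinStr) : ℕ := Encodable.encode a

/-- A (conditional) machine: it takes a program (a binary string) and a condition
(a natural number, which encodes the conditioning data: a number, a string via `enc`,
or a tuple combined with the standard pairing `Nat.pair`) and possibly outputs a
natural number (encoding the result in the same way). -/
abbrev Machine := BinStr → ℕ →. ℕ

/-- Conditional Kolmogorov complexity of `x` given condition `y`, with respect to the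
machine `U`: the minimal length of a program `p` such that `U p y = x`. -/
noncomputable def cplx (U : Machine) (x y : ℕ) : ℕ :=
  sInf {n | ∃ p : BinStr, p.length = n ∧ x ∈ U p y}

/-- Unconditional Kolmogorov complexity: conditional complexity with the trivial
condition `0`. -/
noncomputable def cplx0 (U : Machine) (x : ℕ) : ℕ := cplx U x 0

/-- `U` is an optimal universal machine for plain complexity: it is partial computable
and simulates every partial computable machine with at most a constant overhead in
program length. -/
def IsOptimal (U : Machine) : Prop :=
  Partrec₂ U ∧
    ∀ V : Machine, Partrec₂ V →
      ∃ c : ℕ, ∀ (p : BinStr) (y x : ℕ), x ∈ V p y →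
        ∃ q : BinStr, q.length ≤ p.length + c ∧ x ∈ U q y

/-- A machine is prefix-free if, for every condition, the set of its halting programs
is prefix-free: no halting program is a proper prefix of another halting program. -/
def PrefixFreeMachine (M : Machine) : Prop :=
  ∀ (y : ℕ) (p q : BinStr), p <+: q → (M p y).Dom → (M q y).Dom → p = q

/-- `U` is an optimal universal prefix-free machine: it is partial computable,
prefix-free, and simulates every partial computable prefix-free machine with at most
a constant overhead in program length. -/
def IsPrefixOptimal (U : Machine) : Prop :=
  Partrec₂ U ∧ PrefixFreeMachine U ∧
    ∀ V : Machine, Partrec₂ V → PrefixFreeMachine V →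
      ∃ c : ℕ, ∀ (p : BinStr) (y x : ℕ), x ∈ V p y →
        ∃ q : BinStr, q.length ≤ p.length + c ∧ x ∈ U q y


/-! The bound `K(x | C(x)) ≤ C(x) + O(1)` holds because programs of one fixed length form a
prefix-free set: given `n`, run the plain machine on programs of length exactly `n`.

For `C(x) ≤ K(x | C(x)) + O(1)`, encode a program `q` with `V q n = x` by the padded program
`1ᵏ 0 1ᵈ 0 q`, whose decoder runs `V q` with condition `(its own length) + k`. If `C(x)` exceeded
`|q| + 2k + 1`, the padding `d` could be chosen so that this condition is `C(x)`; the padded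
program then has length `C(x) - k`, and its simulation by the optimal `U` has length
`C(x) - k + c < C(x)` once `k > c`. The shift `k` is read from the program, so the decoder does not
depend on the simulation constant `c`. -/

section Complexity

variable {U : Machine} {x y : ℕ} {p : BinStr}

theorem cplx_le_length (h : x ∈ U p y) : cplx U x y ≤ p.length :=
  Nat.sInf_le ⟨p, rfl, h⟩

theorem exists_length_eq_cplx (h : x ∈ U p y) :
    ∃ q : BinStr, q.length = cplx U x y ∧ x ∈ U q y :=
  Nat.sInf_mem (s := {n | ∃ q : BinStr, q.length = n ∧ x ∈ U q y}) ⟨p.length, p, rfl, h⟩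

end Complexity

theorem IsOptimal.exists_mem {U : Machine} (hU : IsOptimal U) (x y : ℕ) :
    ∃ p : BinStr, x ∈ U p y := by
  obtain ⟨_, hc⟩ := hU.2 (fun _ _ => Part.some x) (Partrec.const' (Part.some x)).to₂
  obtain ⟨q, _, hq⟩ := hc [] y x (Part.mem_some x)
  exact ⟨q, hq⟩

def exactLengthMachine (U : Machine) : Machine := fun p n =>
  bif p.length == n then U p 0 else Part.none

theorem mem_exactLengthMachine {U : Machine} {p : BinStr} {n x : ℕ} :
    x ∈ exactLengthMachine U p n ↔ p.length = n ∧ x ∈ U p 0 := by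
  by_cases h : p.length = n <;> simp [exactLengthMachine, Bool.cond_eq_ite, h]

theorem exactLengthMachine_partrec {U : Machine} (hU : Partrec₂ U) :
    Partrec₂ (exactLengthMachine U) :=
  Partrec.cond (Primrec.beq.comp (Primrec.list_length.comp .fst) .snd).to_comp
    (hU.comp .fst (.const 0)) Partrec.none

theorem prefixFreeMachine_exactLengthMachine (U : Machine) :
    PrefixFreeMachine (exactLengthMachine U) := by
  intro n p q hpq hp hq
  obtain ⟨_, hp⟩ := Part.dom_iff_mem.1 hp
  obtain ⟨_, hq⟩ := Part.dom_iff_mem.1 hq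
  exact hpq.eq_of_length
    ((mem_exactLengthMachine.1 hp).1.trans (mem_exactLengthMachine.1 hq).1.symm)

theorem exists_program_le_cplx0 {U V : Machine} (hU : IsOptimal U) (hV : IsPrefixOptimal V) :
    ∃ c : ℕ, ∀ x : ℕ, ∃ q : BinStr, x ∈ V q (cplx0 U x) ∧ q.length ≤ cplx0 U x + c := by
  obtain ⟨c, hc⟩ := hV.2.2 _ (exactLengthMachine_partrec hU.1)
    (prefixFreeMachine_exactLengthMachine U)
  refine ⟨c, fun x => ?_⟩
  obtain ⟨p₀, hp₀⟩ := hU.exists_mem x 0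
  obtain ⟨p, hp_len, hp⟩ := exists_length_eq_cplx hp₀
  obtain ⟨q, hq_len, hq⟩ := hc p (cplx0 U x) x (mem_exactLengthMachine.2 ⟨hp_len, hp⟩)
  exact ⟨q, hq, by rwa [cplx0, ← hp_len]⟩

def decodeUnary (l : BinStr) : Option (ℕ × BinStr) :=
  if l.findIdx (! ·) < l.length then some (l.findIdx (! ·), l.drop (l.findIdx (! ·) + 1))
  else none

theorem decodeUnary_primrec : Primrec decodeUnary := by
  have hk : Primrec fun l : BinStr => l.findIdx (! ·) :=
    Primrec.list_findIdx .id (Primrec.not.comp .snd).to₂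
  refine Primrec.ite (Primrec.nat_lt.comp hk .list_length) ?_ (.const none)
  exact Primrec.option_some.comp (hk.pair (Primrec.list_drop.comp (Primrec.succ.comp hk) .id))

theorem decodeUnary_replicate_append (k : ℕ) (r : BinStr) :
    decodeUnary (List.replicate k true ++ false :: r) = some (k, r) := by
  have hk : (List.replicate k true ++ false :: r).findIdx (! ·) = k := by
    induction k with
    | zero => simp [List.findIdx_cons]
    | succ k ih => simpa [List.replicate_succ, List.findIdx_cons] using ih
  simp [decodeUnary, hk, List.drop_append]

def decodePadded (p : BinStr) : Option (BinStr × ℕ) :=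
  (decodeUnary p).bind fun kr => (decodeUnary kr.2).map fun dq => (dq.2, p.length + kr.1)

theorem decodePadded_primrec : Primrec decodePadded := by
  have hrest : Primrec₂ fun (_ : BinStr) (kr : ℕ × BinStr) => decodeUnary kr.2 :=
    (decodeUnary_primrec.comp (Primrec.snd.comp .snd)).to₂
  have hout : Primrec₂ fun (pkr : BinStr × (ℕ × BinStr)) (dq : ℕ × BinStr) =>
      (dq.2, pkr.1.length + pkr.2.1) :=
    (Primrec.snd.comp .snd).pair
      (Primrec.nat_add.comp (Primrec.list_length.comp (Primrec.fst.comp .fst))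
        (Primrec.fst.comp (Primrec.snd.comp .fst))) |>.to₂
  exact Primrec.option_bind decodeUnary_primrec (Primrec.option_map hrest hout)

theorem decodePadded_replicate_append (k d : ℕ) (q : BinStr) :
    decodePadded (List.replicate k true ++ false :: (List.replicate d true ++ false :: q)) =
      some (q, k + d + q.length + 2 + k) := by
  simp [decodePadded, decodeUnary_replicate_append]
  omega

def paddedMachine (V : Machine) : Machine := fun p _ =>
  (Part.ofOption (decodePadded p)).bind fun qn => V qn.1 qn.2

theorem paddedMachine_partrec {V : Machine} (hV : Partrec₂ V) : Partrec₂ (paddedMachine V) :=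
  (Computable.ofOption (decodePadded_primrec.to_comp.comp .fst)).bind <|
    hV.comp (Computable.fst.comp .snd) (Computable.snd.comp .snd)

theorem IsOptimal.cplx0_le_length_add {U V : Machine} (hU : IsOptimal U) (hV : Partrec₂ V) :
    ∃ c : ℕ, ∀ (x : ℕ) (q : BinStr), x ∈ V q (cplx0 U x) → cplx0 U x ≤ q.length + c := by
  obtain ⟨c, hc⟩ := hU.2 _ (paddedMachine_partrec hV)
  refine ⟨2 * c + 3, fun x q hq => ?_⟩
  by_contra! hlong
  set d := cplx0 U x - (q.length + 2 * c + 4)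
  have hdecode : decodePadded (List.replicate (c + 1) true ++ false ::
      (List.replicate d true ++ false :: q)) = some (q, cplx0 U x) := by
    rw [decodePadded_replicate_append]
    congr 2
    omega
  obtain ⟨q', hq'_len, hq'⟩ := hc _ 0 x
    (Part.mem_bind_iff.2 ⟨_, Part.mem_ofOption.2 hdecode, hq⟩)
  have hmin : cplx0 U x ≤ q'.length := cplx_le_length hq'
  simp only [List.length_append, List.length_replicate, List.length_cons] at hq'_len
  omega

/-- `C(a) = K(a | C(a)) + O(1)`. -/
theorem plain_eq_prefix_given_plain (U V : Machine) (hU : IsOptimal U) (hV : IsPrefixOptimal V) :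
    ∃ c : ℕ, ∀ a : BinStr,
      |(cplx0 U (enc a) : ℤ) - (cplx V (enc a) (cplx0 U (enc a)) : ℤ)| ≤ (c : ℤ) := by
  obtain ⟨c₁, h₁⟩ := exists_program_le_cplx0 hU hV
  obtain ⟨c₂, h₂⟩ := hU.cplx0_le_length_add hV.1
  refine ⟨c₁ + c₂, fun a => ?_⟩
  obtain ⟨q, hq, hq_len⟩ := h₁ (enc a)
  obtain ⟨q', hq'_len, hq'⟩ := exists_length_eq_cplx hq
  have hK_le := cplx_le_length hq
  have hC_le := h₂ _ _ hq'
  rw [abs_le]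
  omega
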